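/- For every n ≥ 1, the word 0203 · R_3⁺ · R_4⁺ · ⋯ · R_{n+2}⁺ · R_{n+3} is a suffix of α(n). -/

import Mathlib

/-
The only interaction between ⁺ and concatenation is `(u ++ v)⁺ = u ++ v⁺` for nonempty `v`,
so a nonempty suffix of `w` has its increment as a suffix of `w⁺`. Since every `R m` is nonempty,
`S (n + 1) = (S n)⁺ ++ R (n + 4)`, and the last two factors of the recursion for `α (n + 1)` are
`α(n)⁺ ++ R (n + 4)`; induction on `n` from the base case finishes the proof.
-/

def rho (w : List ℕ) : List ℕ := w.flatMap (fun n => [0, n + 1])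

def R (n : ℕ) : List ℕ := rho^[n] [0]

def succW (w : List ℕ) : List ℕ := w.dropLast ++ [w.getLast! + 1]

def C : List ℕ := [0, 1, 0, 2, 0, 3, 0, 1, 0, 2]

/-- The word 0203·R₃⁺·R₄⁺·⋯·R_{n+2}⁺·R_{n+3}. -/
def S (n : ℕ) : List ℕ :=
  [0, 2, 0, 3] ++ ((List.range n).map (fun j => succW (R (j + 3)))).flatten ++ R (n + 3)

theorem List.getLast!_append_of_ne_nil {α : Type*} [Inhabited α] {l l' : List α} (h : l' ≠ []) :
    (l ++ l').getLast! = l'.getLast! := by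
  simp only [List.getLast!_eq_getLast?_getD, List.getLast?_append_of_ne_nil _ h]

theorem rho_eq_nil_iff {w : List ℕ} : rho w = [] ↔ w = [] := by
  cases w <;> simp [rho]

theorem R_succ (n : ℕ) : R (n + 1) = rho (R n) :=
  Function.iterate_succ_apply' rho n [0]

theorem R_ne_nil (n : ℕ) : R n ≠ [] := by
  induction n with
  | zero => simp [R]
  | succ n ih => rwa [R_succ, Ne, rho_eq_nil_iff]

theorem succW_append_of_ne_nil {u v : List ℕ} (hv : v ≠ []) : succW (u ++ v) = u ++ succW v := by
  rw [succW, succW, List.dropLast_append_of_ne_nil hv, List.getLast!_append_of_ne_nil hv,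
    List.append_assoc]

theorem List.IsSuffix.succW {s t : List ℕ} (h : s <:+ t) (hs : s ≠ []) : succW s <:+ succW t := by
  obtain ⟨u, rfl⟩ := h
  rw [succW_append_of_ne_nil hs]
  exact List.suffix_append u _

theorem S_ne_nil (n : ℕ) : S n ≠ [] := by simp [S]

theorem S_succ (n : ℕ) : S (n + 1) = succW (S n) ++ R (n + 4) := by
  rw [S, S, succW_append_of_ne_nil (R_ne_nil _), List.range_succ, List.map_append]
  simp [List.append_assoc]

/-- For every n ≥ 1, 0203·R₃⁺·R₄⁺·⋯·R_{n+2}⁺·R_{n+3} is a suffix of α(n), where α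
satisfies the recursion α(n) = α(n−1)⁺·R_{n+3}·C·α(n−1)⁺·R_{n+3} for n ≥ 2 and the
base case that 0203·R₃⁺·R₄ is a suffix of α(1). -/
theorem S_suffix_alpha (α : ℕ → List ℕ)
    (hbase : S 1 <:+ α 1)
    (hrec : ∀ n, 2 ≤ n →
      α n = succW (α (n - 1)) ++ R (n + 3) ++ C ++ succW (α (n - 1)) ++ R (n + 3)) :
    ∀ n, 1 ≤ n → S n <:+ α n := by
  intro n hn
  induction n, hn using Nat.le_induction with
  | base => exact hbase
  | succ n hn ih =>
    rw [hrec (n + 1) (by omega), Nat.add_sub_cancel, S_succ, List.append_assoc _ (succW (α n))]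
    exact List.suffix_append_of_suffix (List.suffix_append_self_iff.mpr (ih.succW (S_ne_nil n)))
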